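/- arXiv:1412.1457 — 6 statements merged into one kernel-verified Lean document; each statement's English description precedes it below -/
import Mathlib

section
/- Associate to a cycle (k, l, n, m) (the locus k(u²+v²) − 2lu − 2nv + m = 0) the matrix C = [[l + i·n, −m], [k, −l + i·n]]. If M = [[a, b], [c, d]] is a real matrix with det M = ±1, then the Möbius transformation z ↦ (az+b)/(cz+d) maps the cycle with matrix C to the cycle with matrix M·C·M⁻¹. -/
/-!
The left side of the cycle equation is `k z z̄ - (l - i n) z - (l + i n) z̄ + m = vᵀ (J C) v̄`
with `v = (z, 1)` and `J = [[0, 1], [-1, 0]]`. For real `M` we have `J M = det M • M⁻ᵀ J`, so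
`J (M C M⁻¹) = det M • M⁻ᵀ (J C) M⁻¹`, and `M v = (c z + d) (w, 1)` with `w = (a z + b) / (c z + d)`:
the equation of `M C M⁻¹` at `w` is `det M / |c z + d|²` times the equation of `C` at `z`.
Conjugation keeps the shape of `C` (it fixes the scalar part `n i`), so `M C M⁻¹` is again a
cycle matrix, with explicit new coefficients `k, l, m`.
-/

open Complex

/-- A point `z = u + iv` lies on the cycle whose associated matrix is
`[[l + i n, -m], [k, -l + i n]]`, i.e. it satisfies `k(u²+v²) - 2lu - 2nv + m = 0`.
The coefficients are extracted from the matrix entries. -/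
def onCycleMatrix (C : Matrix (Fin 2) (Fin 2) ℂ) (z : ℂ) : Prop :=
  (C 1 0).re * (z.re ^ 2 + z.im ^ 2) - 2 * (C 0 0).re * z.re - 2 * (C 0 0).im * z.im +
    (-(C 0 1)).re = 0

open ComplexConjugate

def cycleMatrix (k l n m : ℝ) : Matrix (Fin 2) (Fin 2) ℂ :=
  !![(l : ℂ) + (n : ℂ) * I, -(m : ℂ); (k : ℂ), -(l : ℂ) + (n : ℂ) * I]

def cycleValue (k l n m : ℝ) (z : ℂ) : ℝ :=
  k * (z.re ^ 2 + z.im ^ 2) - 2 * l * z.re - 2 * n * z.im + m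

theorem onCycleMatrix_cycleMatrix_iff (k l n m : ℝ) (z : ℂ) :
    onCycleMatrix (cycleMatrix k l n m) z ↔ cycleValue k l n m z = 0 := by
  simp [onCycleMatrix, cycleMatrix, cycleValue]

theorem ofReal_cycleValue (k l n m : ℝ) (z : ℂ) :
    (cycleValue k l n m z : ℂ) = k * z * conj z - (l - n * I) * z - (l + n * I) * conj z + m := by
  apply Complex.ext <;> simp [cycleValue, sq] <;> ring

theorem mul_cycleMatrix_mul_inv {k l n m a b c d : ℝ} (hδ : a * d - b * c ≠ 0) :
    !![(a : ℂ), b; c, d] * cycleMatrix k l n m * (!![(a : ℂ), b; c, d])⁻¹ =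
      cycleMatrix ((a * d - b * c)⁻¹ * (d ^ 2 * k + 2 * c * d * l + c ^ 2 * m))
        ((a * d - b * c)⁻¹ * (b * d * k + (a * d + b * c) * l + a * c * m)) n
        ((a * d - b * c)⁻¹ * (b ^ 2 * k + 2 * a * b * l + a ^ 2 * m)) := by
  have hδ' : (a : ℂ) * d - b * c ≠ 0 := by exact_mod_cast hδ
  rw [Matrix.inv_def, Matrix.adjugate_fin_two_of, Matrix.det_fin_two_of, Ring.inverse_eq_inv,
    Matrix.mul_smul, cycleMatrix, cycleMatrix, Matrix.mul_fin_two, Matrix.mul_fin_two]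
  simp only [Matrix.smul_of, Matrix.smul_cons, Matrix.smul_empty, smul_eq_mul]
  congrm !![?_, ?_; ?_, ?_] <;> push_cast <;> field_simp <;> ring

theorem cycleValue_mobius {k l n m a b c d : ℝ} (hδ : a * d - b * c ≠ 0) {z : ℂ}
    (hz : (c : ℂ) * z + d ≠ 0) :
    cycleValue ((a * d - b * c)⁻¹ * (d ^ 2 * k + 2 * c * d * l + c ^ 2 * m))
        ((a * d - b * c)⁻¹ * (b * d * k + (a * d + b * c) * l + a * c * m)) n
        ((a * d - b * c)⁻¹ * (b ^ 2 * k + 2 * a * b * l + a ^ 2 * m)) ((a * z + b) / (c * z + d)) =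
      (a * d - b * c) * cycleValue k l n m z / normSq (c * z + d) := by
  have hδ' : (a : ℂ) * d - b * c ≠ 0 := by exact_mod_cast hδ
  have hz' : (c : ℂ) * conj z + d ≠ 0 := by simpa using (map_ne_zero conj).mpr hz
  apply ofReal_injective
  rw [ofReal_div, ← mul_conj, ofReal_mul, ofReal_cycleValue, ofReal_cycleValue]
  simp only [map_div₀, map_add, map_mul, conj_ofReal]
  push_cast
  field_simp
  ring

theorem mobius_maps_cycle_to_conjugated_cycle_general
    (k l n m a b c d : ℝ)
    (hdet : a * d - b * c = 1 ∨ a * d - b * c = -1)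
    (z : ℂ) (hz : (c : ℂ) * z + (d : ℂ) ≠ 0) :
    onCycleMatrix (!![(l : ℂ) + (n : ℂ) * I, -(m : ℂ); (k : ℂ), -(l : ℂ) + (n : ℂ) * I]) z ↔
      onCycleMatrix
        ((!![(a : ℂ), (b : ℂ); (c : ℂ), (d : ℂ)]) *
          (!![(l : ℂ) + (n : ℂ) * I, -(m : ℂ); (k : ℂ), -(l : ℂ) + (n : ℂ) * I]) *
          (!![(a : ℂ), (b : ℂ); (c : ℂ), (d : ℂ)])⁻¹)
        (((a : ℂ) * z + (b : ℂ)) / ((c : ℂ) * z + (d : ℂ))) := by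
  have hδ : a * d - b * c ≠ 0 := by rcases hdet with h | h <;> simp [h]
  have hN : normSq ((c : ℂ) * z + d) ≠ 0 := (normSq_pos.mpr hz).ne'
  change onCycleMatrix (cycleMatrix k l n m) z ↔
    onCycleMatrix (!![(a : ℂ), b; c, d] * cycleMatrix k l n m * (!![(a : ℂ), b; c, d])⁻¹) _
  rw [mul_cycleMatrix_mul_inv hδ, onCycleMatrix_cycleMatrix_iff, onCycleMatrix_cycleMatrix_iff,
    cycleValue_mobius hδ hz]
  simp [hδ, hN]

/-- If `M = [[a, b], [c, d]]` is real with `det M = ±1`, then the Möbius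
transformation `z ↦ (az+b)/(cz+d)` maps the cycle with matrix
`C = [[l + i n, -m], [k, -l + i n]]` to the cycle with matrix `M C M⁻¹`:
`z` lies on the cycle `C` iff `(az+b)/(cz+d)` lies on the cycle `M C M⁻¹`. -/
theorem mobius_maps_cycle_to_conjugated_cycle
    (k l n m a b c d : ℝ)
    (hC : ¬(k = 0 ∧ l = 0 ∧ n = 0 ∧ m = 0))
    (hdet : a * d - b * c = 1 ∨ a * d - b * c = -1)
    (z : ℂ) (hz : (c : ℂ) * z + (d : ℂ) ≠ 0) :
    onCycleMatrix (!![(l : ℂ) + (n : ℂ) * I, -(m : ℂ); (k : ℂ), -(l : ℂ) + (n : ℂ) * I]) z ↔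
      onCycleMatrix
        ((!![(a : ℂ), (b : ℂ); (c : ℂ), (d : ℂ)]) *
          (!![(l : ℂ) + (n : ℂ) * I, -(m : ℂ); (k : ℂ), -(l : ℂ) + (n : ℂ) * I]) *
          (!![(a : ℂ), (b : ℂ); (c : ℂ), (d : ℂ)])⁻¹)
        (((a : ℂ) * z + (b : ℂ)) / ((c : ℂ) * z + (d : ℂ))) :=
  mobius_maps_cycle_to_conjugated_cycle_general k l n m a b c d hdet z hz
end

section
/- Two circles represented by normalised cycle vectors C = (k, l, n, m) and C̃ = (k̃, l̃, ñ, m̃) with ⟨C,C⟩ = ⟨C̃,C̃⟩ = 1 (where ⟨C,C̃⟩ = k·m̃ + m·k̃ − 2n·ñ − 2l·l̃ up to sign conventions) are externally tangent if and only if (l + l̃)² + (n + ñ)² − (m + m̃)(k + k̃) = 0. -/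
/-! Clearing the denominator `k k'`, the normalisations `l² + n² - mk = 1 = l'² + n'² - m'k'`
turn `|c - c'|² - (r + r')²` into `-((l + l')² + (n + n')² - (m + m')(k + k')) / (k k')`, so the
squared tangency condition is exactly the vanishing of that expression. -/

theorem centre_dist_sq_sub_radii_sum_sq_of_normalised {k l n m k' l' n' m' : ℝ}
    (hk : k ≠ 0) (hk' : k' ≠ 0)
    (hnorm : l ^ 2 + n ^ 2 - m * k = 1) (hnorm' : l' ^ 2 + n' ^ 2 - m' * k' = 1) :
    (l / k - l' / k') ^ 2 + (n / k - n' / k') ^ 2 - (1 / k + 1 / k') * (1 / k + 1 / k') =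
      -((l + l') ^ 2 + (n + n') ^ 2 - (m + m') * (k + k')) / (k * k') := by
  field_simp
  linear_combination (k' ^ 2 + k * k') * hnorm + (k ^ 2 + k * k') * hnorm'

/-- Two circles represented by normalised cycle vectors
`(k, l, n, m)`, `(k̃, l̃, ñ, m̃)` with `l² + n² - mk = 1 = l̃² + ñ² - m̃k̃` (so each has
radius `1/k`, taking `k, k̃ > 0`) are externally tangent — the distance between the
centres equals the sum of the radii — if and only if
`(l + l̃)² + (n + ñ)² - (m + m̃)(k + k̃) = 0`. -/
theorem normalised_cycles_externally_tangent_iff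
    (k l n m k' l' n' m' : ℝ)
    (hk : 0 < k) (hk' : 0 < k')
    (hnorm : l ^ 2 + n ^ 2 - m * k = 1) (hnorm' : l' ^ 2 + n' ^ 2 - m' * k' = 1) :
    Real.sqrt ((l / k - l' / k') ^ 2 + (n / k - n' / k') ^ 2) = 1 / k + 1 / k' ↔
      (l + l') ^ 2 + (n + n') ^ 2 - (m + m') * (k + k') = 0 := by
  rw [Real.sqrt_eq_iff_mul_self_eq_of_pos (by positivity), eq_comm, ← sub_eq_zero,
    centre_dist_sq_sub_radii_sum_sq_of_normalised hk.ne' hk'.ne' hnorm hnorm',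
    neg_div, neg_eq_zero, div_eq_zero_iff, or_iff_left (mul_pos hk hk').ne']
end

section
/- Let M = [[a, b], [c, d]] be a real matrix with δ = det M = ±1, d ≠ 0, k > 0. The Möbius image under M of the cycle (k, 0, 1, 0) (the circle k(u²+v²) − 2v = 0 through the origin tangent to the real axis) is the horocycle (d²k, bdk, δ, b²k), which is tangent to the real line at the point b/d and has radius 1/(k·d²). -/
/-!
Write `w = (a z + b)/(c z + d)` and `δ = a d - b c`. For real coefficients
`d w - b = δ z / (c z + d)` and `Im w = δ Im z / |c z + d|²`, while the horocycle's equation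
`d²k|w|² - 2bdk Re w - 2δ Im w + b²k` is `k |d w - b|² - 2δ Im w`. Substituting gives
`δ² (k|z|² - 2 Im z) / |c z + d|²`, which vanishes on the original circle.
-/

open Complex

def cycleEval (k l n m : ℝ) (w : ℂ) : ℝ :=
  k * normSq w - 2 * l * w.re - 2 * n * w.im + m

-- Completing the square: centre `(l/k, n/k)`; meaningless when `k = 0`.
noncomputable def cycleRadiusSq (k l n m : ℝ) : ℝ :=
  (l ^ 2 + n ^ 2 - m * k) / k ^ 2

noncomputable def realMobius (a b c d : ℝ) (z : ℂ) : ℂ :=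
  (a * z + b) / (c * z + d)

theorem im_realMobius (a b c d : ℝ) (z : ℂ) :
    (realMobius a b c d z).im = (a * d - b * c) * z.im / normSq (c * z + d) := by
  rw [realMobius, div_im]
  simp only [add_re, add_im, mul_re, mul_im, ofReal_re, ofReal_im]
  ring

theorem ofReal_mul_realMobius_sub (a b c d : ℝ) {z : ℂ} (hz : (c : ℂ) * z + d ≠ 0) :
    d * realMobius a b c d z - b = ((a * d - b * c : ℝ) : ℂ) * z / (c * z + d) := by
  rw [realMobius, mul_div_assoc', div_sub' hz]
  push_cast
  ring

theorem cycleEval_eq_mul_normSq_ofReal_mul_sub (b d k n : ℝ) (w : ℂ) :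
    cycleEval (d ^ 2 * k) (b * d * k) n (b ^ 2 * k) w =
      k * normSq (d * w - b) - 2 * n * w.im := by
  simp only [cycleEval, normSq_apply, sub_re, sub_im, mul_re, mul_im, ofReal_re, ofReal_im]
  ring

theorem cycleEval_realMobius (a b c d k n : ℝ) {z : ℂ} (hz : (c : ℂ) * z + d ≠ 0) :
    cycleEval (d ^ 2 * k) (b * d * k) ((a * d - b * c) * n) (b ^ 2 * k)
        (realMobius a b c d z) =
      (a * d - b * c) ^ 2 * cycleEval k 0 n 0 z / normSq (c * z + d) := by
  have hN : normSq ((c : ℂ) * z + d) ≠ 0 := normSq_eq_zero.not.mpr hz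
  rw [cycleEval_eq_mul_normSq_ofReal_mul_sub, ofReal_mul_realMobius_sub a b c d hz,
    im_realMobius, normSq_div, normSq_mul, normSq_ofReal, cycleEval]
  field_simp
  ring

theorem horocycle_eq_zero_iff {b d k : ℝ} (hd : d ≠ 0) (hk : k ≠ 0) (u : ℝ) :
    d ^ 2 * k * u ^ 2 - 2 * (b * d * k) * u + b ^ 2 * k = 0 ↔ u = b / d := by
  have hsq : d ^ 2 * k * u ^ 2 - 2 * (b * d * k) * u + b ^ 2 * k = k * (u * d - b) ^ 2 := by
    ring
  rw [hsq, mul_eq_zero, pow_eq_zero_iff two_ne_zero, sub_eq_zero, eq_div_iff hd]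
  simp [hk]

theorem cycleRadiusSq_horocycle (b d k n : ℝ) :
    cycleRadiusSq (d ^ 2 * k) (b * d * k) n (b ^ 2 * k) = (n / (k * d ^ 2)) ^ 2 := by
  rw [cycleRadiusSq]
  ring

/-- Let `M = [[a, b], [c, d]]` be real with `δ = det M = ±1`, `d ≠ 0`,
`k > 0`. The Möbius image under `M` of the cycle `(k, 0, 1, 0)` (the circle
`k(u²+v²) - 2v = 0` through the origin tangent to the real axis) is the horocycle
`(d²k, bdk, δ, b²k)`: every image point satisfies its equation, it touches the real line
exactly at the point `b/d`, and it has radius `1/(k d²)`. -/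
theorem mobius_image_of_tangent_circle_is_horocycle
    (a b c d k : ℝ) (δ : ℝ) (hδ : δ = a * d - b * c)
    (hδ1 : δ = 1 ∨ δ = -1) (hd : d ≠ 0) (hk : 0 < k) :
    (∀ z : ℂ, k * (z.re ^ 2 + z.im ^ 2) - 2 * z.im = 0 → (c : ℂ) * z + (d : ℂ) ≠ 0 →
      (d ^ 2 * k) * ((((a : ℂ) * z + b) / ((c : ℂ) * z + d)).re ^ 2 +
          (((a : ℂ) * z + b) / ((c : ℂ) * z + d)).im ^ 2)
        - 2 * (b * d * k) * (((a : ℂ) * z + b) / ((c : ℂ) * z + d)).re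
        - 2 * δ * (((a : ℂ) * z + b) / ((c : ℂ) * z + d)).im + b ^ 2 * k = 0) ∧
    (∀ u : ℝ, (d ^ 2 * k) * u ^ 2 - 2 * (b * d * k) * u + b ^ 2 * k = 0 ↔ u = b / d) ∧
    ((b * d * k) ^ 2 + δ ^ 2 - (b ^ 2 * k) * (d ^ 2 * k)) / (d ^ 2 * k) ^ 2 =
      (1 / (k * d ^ 2)) ^ 2 := by
  refine ⟨fun z hz hden => ?_, horocycle_eq_zero_iff hd hk.ne', ?_⟩
  · have hcycle : cycleEval k 0 1 0 z = 0 := by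
      rw [cycleEval, normSq_apply, ← sq, ← sq]
      linear_combination hz
    have himage := cycleEval_realMobius a b c d k 1 hden
    rw [hcycle, mul_zero, zero_div, mul_one, ← hδ, cycleEval, normSq_apply] at himage
    simp only [realMobius] at himage
    linear_combination himage
  · have hδsq : δ ^ 2 = 1 := by rcases hδ1 with rfl | rfl <;> norm_num
    change cycleRadiusSq (d ^ 2 * k) (b * d * k) δ (b ^ 2 * k) = _
    rw [cycleRadiusSq_horocycle, div_pow, div_pow, hδsq, one_pow]
end

section
/- Let M = [[a, b], [c, d]] be real with det M = δ = ±1. The image under M of the line (0, 1, n, 0) (a non-horizontal line through the origin) is the cycle (2cd, ad + bc, δn, 2ab), which passes through the real points a/c and b/d. -/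
/-!
Clearing the denominator `|cz + d|²` turns the equation of the image cycle at `(az + b)/(cz + d)`
into `δ²` times the equation of the line at `z`: the `|z|²` and constant terms cancel, and the
`Re z`, `Im z` coefficients combine to `-2(ad - bc)²` and `-2δ²n`. On the real axis the image cycle
reads `2(cx - a)(dx - b) = 0`, which vanishes at `a/c` and `b/d`.
-/

open Complex ComplexConjugate

def cycleEq (k l n m : ℝ) (w : ℂ) : ℝ :=
  k * (w.re ^ 2 + w.im ^ 2) - 2 * l * w.re - 2 * n * w.im + m

lemma normSq_mul_cycleEq_div (k l n m : ℝ) (p q : ℂ) (hq : q ≠ 0) :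
    normSq q * cycleEq k l n m (p / q) =
      k * normSq p - 2 * l * (p * conj q).re - 2 * n * (p * conj q).im + m * normSq q := by
  have hq' : normSq q ≠ 0 := normSq_eq_zero.not.mpr hq
  have hdiv : p / q = p * conj q * ((normSq q)⁻¹ : ℝ) := by
    rw [div_eq_mul_inv, inv_def, mul_assoc, ofReal_inv]
  have hsq (w : ℂ) : w.re ^ 2 + w.im ^ 2 = normSq w := by rw [normSq_apply]; ring
  rw [cycleEq, hsq, normSq_div, hdiv, re_mul_ofReal, im_mul_ofReal]
  field_simp

lemma normSq_mul_cycleEq_mobius_line (a b c d n : ℝ) (z : ℂ) (hq : (c : ℂ) * z + d ≠ 0) :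
    normSq ((c : ℂ) * z + d) *
        cycleEq (2 * c * d) (a * d + b * c) ((a * d - b * c) * n) (2 * a * b)
          (((a : ℂ) * z + b) / ((c : ℂ) * z + d)) =
      (a * d - b * c) ^ 2 * cycleEq 0 1 n 0 z := by
  rw [normSq_mul_cycleEq_div _ _ _ _ _ _ hq]
  simp only [cycleEq, normSq_apply, mul_re, mul_im, add_re, add_im, conj_re, conj_im,
    ofReal_re, ofReal_im]
  ring

lemma real_trace_mobius_cycle (a b c d x : ℝ) :
    2 * c * d * x ^ 2 - 2 * (a * d + b * c) * x + 2 * a * b = 2 * (c * x - a) * (d * x - b) := by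
  ring

theorem mobius_image_of_line_through_origin_general
    (a b c d n : ℝ) (δ : ℝ) (hδ : δ = a * d - b * c)
    (hc : c ≠ 0) (hd : d ≠ 0) :
    (∀ z : ℂ, -2 * z.re - 2 * n * z.im = 0 → (c : ℂ) * z + (d : ℂ) ≠ 0 →
      (2 * c * d) * ((((a : ℂ) * z + b) / ((c : ℂ) * z + d)).re ^ 2 +
          (((a : ℂ) * z + b) / ((c : ℂ) * z + d)).im ^ 2)
        - 2 * (a * d + b * c) * (((a : ℂ) * z + b) / ((c : ℂ) * z + d)).re
        - 2 * (δ * n) * (((a : ℂ) * z + b) / ((c : ℂ) * z + d)).im + 2 * a * b = 0) ∧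
    ((2 * c * d) * (a / c) ^ 2 - 2 * (a * d + b * c) * (a / c) + 2 * a * b = 0) ∧
    ((2 * c * d) * (b / d) ^ 2 - 2 * (a * d + b * c) * (b / d) + 2 * a * b = 0) := by
  subst hδ
  refine ⟨fun z hz hq => ?_, ?_, ?_⟩
  · have hline : cycleEq 0 1 n 0 z = 0 := by simp only [cycleEq]; linarith
    have hmob := normSq_mul_cycleEq_mobius_line a b c d n z hq
    rw [hline, mul_zero] at hmob
    exact (mul_eq_zero.mp hmob).resolve_left (normSq_eq_zero.not.mpr hq)
  · rw [real_trace_mobius_cycle, mul_div_cancel₀ a hc, sub_self, mul_zero, zero_mul]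
  · rw [real_trace_mobius_cycle, mul_div_cancel₀ b hd, sub_self, mul_zero]

/-- Let `M = [[a, b], [c, d]]` be real with `δ = det M = ±1`, `c ≠ 0`,
`d ≠ 0`. The Möbius image under `M` of the line `(0, 1, n, 0)` (a non-horizontal line
through the origin, with equation `-2u - 2nv = 0`) is the cycle
`(2cd, ad + bc, δ n, 2ab)`: every image point satisfies its equation, and it passes
through the real points `a/c` and `b/d`. -/
theorem mobius_image_of_line_through_origin
    (a b c d n : ℝ) (δ : ℝ) (hδ : δ = a * d - b * c)
    (hδ1 : δ = 1 ∨ δ = -1) (hc : c ≠ 0) (hd : d ≠ 0) :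
    (∀ z : ℂ, -2 * z.re - 2 * n * z.im = 0 → (c : ℂ) * z + (d : ℂ) ≠ 0 →
      (2 * c * d) * ((((a : ℂ) * z + b) / ((c : ℂ) * z + d)).re ^ 2 +
          (((a : ℂ) * z + b) / ((c : ℂ) * z + d)).im ^ 2)
        - 2 * (a * d + b * c) * (((a : ℂ) * z + b) / ((c : ℂ) * z + d)).re
        - 2 * (δ * n) * (((a : ℂ) * z + b) / ((c : ℂ) * z + d)).im + 2 * a * b = 0) ∧
    ((2 * c * d) * (a / c) ^ 2 - 2 * (a * d + b * c) * (a / c) + 2 * a * b = 0) ∧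
    ((2 * c * d) * (b / d) ^ 2 - 2 * (a * d + b * c) * (b / d) + 2 * a * b = 0) :=
  mobius_image_of_line_through_origin_general a b c d n δ hδ hc hd
end

section
/- Let M = [[P_{n-1}, P_n],[Q_{n-1}, Q_n]] with P_{n-1}Q_n − P_nQ_{n-1} = ±1 and Q_{n-1}, Q_n ≠ 0. The image under M of the line through 0 making angle 45° with the real axis (cycle (0, 1, ±1, 0)) is a circle through the points P_{n-1}/Q_{n-1} and P_n/Q_n of radius (√2/2)·|P_n/Q_n − P_{n-1}/Q_{n-1}| = (√2/2)·1/|Q_n·Q_{n-1}|, the geometric mean of √2/(2Q_{n-1}²) and √2/(2Q_n²). -/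
/-- Let `M = [[p, p'], [q, q']] = [[P (n-1), P n], [Q (n-1), Q n]]` with
`δ = p q' - p' q = ±1` and `q, q' ≠ 0`. The image under `M` of the line through `0`
making a `45°` angle with the real axis (the cycle `(0, 1, ν, 0)` with `ν = ±1`) is the
cycle `(2q'q, p'q + q'p, δν, 2p'p)`: it contains every image point of the line, passes
through the real points `p/q` and `p'/q'`, and has radius
`(√2/2)·|p'/q' - p/q| = (√2/2)·1/|q q'|` — the geometric mean of `√2/(2q²)` and
`√2/(2q'²)`. -/
theorem image_of_45_degree_line
    (p q p' q' ν : ℝ) (δ : ℝ) (hδ : δ = p * q' - p' * q)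
    (hδ1 : δ = 1 ∨ δ = -1) (hν : ν = 1 ∨ ν = -1) (hq : q ≠ 0) (hq' : q' ≠ 0) :
    -- every image point of the line `(0, 1, ν, 0)` lies on the cycle
    (∀ z : ℂ, -2 * z.re - 2 * ν * z.im = 0 → (q : ℂ) * z + (q' : ℂ) ≠ 0 →
      (2 * q' * q) * ((((p : ℂ) * z + p') / ((q : ℂ) * z + q')).re ^ 2 +
          (((p : ℂ) * z + p') / ((q : ℂ) * z + q')).im ^ 2)
        - 2 * (p' * q + q' * p) * (((p : ℂ) * z + p') / ((q : ℂ) * z + q')).re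
        - 2 * (δ * ν) * (((p : ℂ) * z + p') / ((q : ℂ) * z + q')).im + 2 * p' * p = 0) ∧
    -- it passes through the real points `p/q` and `p'/q'`
    ((2 * q' * q) * (p / q) ^ 2 - 2 * (p' * q + q' * p) * (p / q) + 2 * p' * p = 0) ∧
    ((2 * q' * q) * (p' / q') ^ 2 - 2 * (p' * q + q' * p) * (p' / q') + 2 * p' * p = 0) ∧
    -- its radius is `(√2/2)·|p'/q' - p/q| = (√2/2)·1/|q q'|` …
    Real.sqrt ((p' * q + q' * p) ^ 2 + (δ * ν) ^ 2 - (2 * p' * p) * (2 * q' * q)) /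
        |2 * q' * q| = Real.sqrt 2 / 2 * |p' / q' - p / q| ∧
    Real.sqrt 2 / 2 * |p' / q' - p / q| = Real.sqrt 2 / 2 * (1 / |q * q'|) ∧
    -- … the geometric mean of `√2/(2q²)` and `√2/(2q'²)`
    (Real.sqrt 2 / 2 * (1 / |q * q'|)) ^ 2 =
      (Real.sqrt 2 / (2 * q ^ 2)) * (Real.sqrt 2 / (2 * q' ^ 2)) := by
  have hν2 : ν ^ 2 = 1 := by rcases hν with h | h <;> simp [h]
  subst hδ
  have hδ2 : (p * q' - p' * q) ^ 2 = 1 := by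
    rcases hδ1 with h | h <;> nlinarith [h]
  have habs : |p' / q' - p / q| = 1 / |q * q'| := by
    have h1 : p' / q' - p / q = -(p * q' - p' * q) / (q * q') := by
      field_simp; ring
    have h2 : |(-(p * q' - p' * q))| = 1 := by
      rcases hδ1 with h | h <;> rw [h] <;> norm_num
    rw [h1, abs_div, h2]
  refine ⟨?_, by field_simp; ring, by field_simp; ring, ?_, by rw [habs], ?_⟩
  · rintro ⟨x, y⟩ h1 h2
    rw [Complex.div_re, Complex.div_im]
    set N := Complex.normSq ((q : ℂ) * ⟨x, y⟩ + (q' : ℂ)) with hN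
    have hN0 : N ≠ 0 := by
      rw [hN]; simpa [Complex.normSq_eq_zero] using h2
    have hNval : N = (q * x + q') ^ 2 + (q * y) ^ 2 := by
      rw [hN]
      simp only [Complex.normSq_apply, Complex.mul_re, Complex.mul_im, Complex.add_re,
        Complex.add_im, Complex.ofReal_re, Complex.ofReal_im]
      ring
    simp only [Complex.mul_re, Complex.mul_im, Complex.add_re, Complex.add_im,
      Complex.ofReal_re, Complex.ofReal_im] at h1 ⊢
    have hx : x = -ν * y := by linarith
    subst hx
    rcases hν with rfl | rfl <;> field_simp [hN0] <;> rw [hNval] <;> ring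
  · have key : (p' * q + q' * p) ^ 2 + ((p * q' - p' * q) * ν) ^ 2
        - (2 * p' * p) * (2 * q' * q) = 2 := by
      linear_combination (1 + ν ^ 2) * hδ2 + hν2
    have h2q : |2 * q' * q| = 2 * |q * q'| := by
      rw [abs_mul, abs_mul, abs_mul, abs_two]; ring
    rw [key, h2q, habs, mul_one_div, div_div]
  · have hss : Real.sqrt 2 * Real.sqrt 2 = 2 := Real.mul_self_sqrt (by norm_num)
    rw [show Real.sqrt 2 / (2 * q ^ 2) * (Real.sqrt 2 / (2 * q' ^ 2))
        = Real.sqrt 2 * Real.sqrt 2 / (4 * (q ^ 2 * q' ^ 2)) by ring, hss,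
      mul_pow, div_pow, div_pow, one_pow, sq_abs,
      show Real.sqrt 2 ^ 2 = 2 by rw [sq, hss]]
    field_simp
    ring
end

section
/- For the 2×2 Clifford matrix M = [[a,b],[c,d]] satisfying the Ahlfors conditions with pseudodeterminant δ = ad* − bc*, and M̄ = [[d*, −b*],[−c*, a*]], the identity M·M̄ = δ·I holds. -/
/-- The negative definite quadratic form on `ℝ^m`, generating the Clifford algebra `Cl(m)`
with relations `eᵢeⱼ + eⱼeᵢ = -2δᵢⱼ`. -/
noncomputable def negEuclideanForm (m : ℕ) : QuadraticForm ℝ (Fin m → ℝ) :=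
  QuadraticMap.weightedSumSquares ℝ (fun _ : Fin m => (-1 : ℝ))

/-- `x ∈ Cl(n)` is a product of vectors of `ℝⁿ`. -/
def IsVectorProduct (n : ℕ) (x : CliffordAlgebra (negEuclideanForm n)) : Prop :=
  ∃ l : List (Fin n → ℝ), x = (l.map (CliffordAlgebra.ι (negEuclideanForm n))).prod

/-- `x ∈ Cl(n)` is a vector of `ℝⁿ`. -/
def IsCliffordVector (n : ℕ) (x : CliffordAlgebra (negEuclideanForm n)) : Prop :=
  ∃ v : Fin n → ℝ, x = CliffordAlgebra.ι (negEuclideanForm n) v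

/-- For a `2×2` Clifford matrix `M = [[a, b], [c, d]]` satisfying the
Ahlfors conditions, with pseudodeterminant `δ = ad* - bc*` and
`M̄ = [[d*, -b*], [-c*, a*]]`, the identity `M·M̄ = δ·I` holds. -/
theorem ahlfors_matrix_mul_bar (n : ℕ)
    (a b c d : CliffordAlgebra (negEuclideanForm n))
    (ha : IsVectorProduct n a) (hb : IsVectorProduct n b)
    (hc : IsVectorProduct n c) (hd : IsVectorProduct n d)
    (hab : IsCliffordVector n (a * CliffordAlgebra.reverse b))
    (hcd : IsCliffordVector n (c * CliffordAlgebra.reverse d))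
    (hca : IsCliffordVector n (CliffordAlgebra.reverse c * a))
    (hdb : IsCliffordVector n (CliffordAlgebra.reverse d * b))
    (δ : ℝ) (hδ0 : δ ≠ 0)
    (hδ : a * CliffordAlgebra.reverse d - b * CliffordAlgebra.reverse c =
      algebraMap ℝ _ δ) :
    (!![a, b; c, d] : Matrix (Fin 2) (Fin 2) (CliffordAlgebra (negEuclideanForm n))) *
        !![CliffordAlgebra.reverse d, -(CliffordAlgebra.reverse b);
           -(CliffordAlgebra.reverse c), CliffordAlgebra.reverse a] =
      δ • (1 : Matrix (Fin 2) (Fin 2) (CliffordAlgebra (negEuclideanForm n))) := by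
  have revinv : ∀ x : CliffordAlgebra (negEuclideanForm n),
      IsCliffordVector n x → CliffordAlgebra.reverse x = x := by
    rintro _ ⟨v, rfl⟩; exact CliffordAlgebra.reverse_ι v
  have h2 : a * CliffordAlgebra.reverse b = b * CliffordAlgebra.reverse a := by
    have := revinv _ hab
    rw [CliffordAlgebra.reverse.map_mul, CliffordAlgebra.reverse_reverse] at this
    exact this.symm
  have h3 : c * CliffordAlgebra.reverse d = d * CliffordAlgebra.reverse c := by
    have := revinv _ hcd
    rw [CliffordAlgebra.reverse.map_mul, CliffordAlgebra.reverse_reverse] at this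
    exact this.symm
  have h4 : d * CliffordAlgebra.reverse a - c * CliffordAlgebra.reverse b =
      algebraMap ℝ _ δ := by
    have := congrArg (CliffordAlgebra.reverse (Q := negEuclideanForm n)) hδ
    rwa [map_sub, CliffordAlgebra.reverse.map_mul, CliffordAlgebra.reverse.map_mul,
      CliffordAlgebra.reverse_reverse, CliffordAlgebra.reverse_reverse,
      CliffordAlgebra.reverse.commutes] at this
  ext i j
  fin_cases i <;> fin_cases j <;>
    simp [Matrix.mul_apply, Fin.sum_univ_two, Matrix.one_apply, mul_neg] <;>
  first
  | (rw [← sub_eq_add_neg, ← Algebra.algebraMap_eq_smul_one]; exact hδ)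
  | (rw [h2]; exact neg_add_cancel _)
  | (rw [h3]; exact add_neg_cancel _)
  | (rw [neg_add_eq_sub, ← Algebra.algebraMap_eq_smul_one]; exact h4)
end
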